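/- Van Zwet density bound implies triangular spread bound: Let G be a distribution function on ℝ with density g satisfying g(G^{-1}(s)) ≤ (c·(s ∧ (1−s)))^{1/2} for all s ∈ (0,1), where c > 0. Then G is at least as spread out as the symmetric triangular distribution with support [−√(2/c), √(2/c)], i.e. G^{-1}(v) − G^{-1}(u) ≥ K^{-1}(v) − K^{-1}(u) for all 0 < u < v < 1, where K is the distribution function of the symmetric triangular distribution on [−√(2/c), √(2/c)]. -/

import Mathlib

/-!
Compare the increments of the two quantile functions over a step `t ≤ t'`. The mass `t' - t`
lies on `(Ginv t, Ginv t']`, where the density is at most `√(c · min t' (1 - t))`: by Lebesgue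
differentiation, almost every point where `g ≠ 0` is a point of increase of `G`, hence its own
quantile, so the hypothesis on `g ∘ Ginv` applies there. The triangular density at `Kinv s` is
exactly `√(c · min s (1 - s))`, so the increment of `Kinv` is at most
`(t' - t) / √(c · min t (1 - t'))`. For steps short compared with `min u (1 - v)` these two square
roots differ by a factor at most `r > 1`, so `r * Ginv - Kinv` increases along a fine partition
of `[u, v]`; then let `r → 1`.
-/

open MeasureTheory Set Filter Topology

section Density

variable {G g : ℝ → ℝ}

lemma eq_add_intervalIntegral_of_eq_integral_Iic (hg : Integrable g)
    (hG : ∀ x, G x = ∫ y in Iic x, g y) (a x : ℝ) : G x = G a + ∫ y in a..x, g y := by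
  rw [hG, hG, ← intervalIntegral.integral_Iic_sub_Iic hg.integrableOn hg.integrableOn]
  ring

lemma monotone_of_eq_integral_Iic (hg : Integrable g) (hg_nonneg : ∀ x, 0 ≤ g x)
    (hG : ∀ x, G x = ∫ y in Iic x, g y) : Monotone G := fun x y hxy => by
  rw [eq_add_intervalIntegral_of_eq_integral_Iic hg hG x y]
  exact le_add_of_nonneg_right (intervalIntegral.integral_nonneg hxy fun z _ => hg_nonneg z)

lemma continuous_of_eq_integral_Iic (hg : Integrable g) (hG : ∀ x, G x = ∫ y in Iic x, g y) :
    Continuous G := by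
  rw [funext (eq_add_intervalIntegral_of_eq_integral_Iic hg hG 0)]
  exact continuous_const.add
    (intervalIntegral.continuous_primitive (fun _ _ => hg.intervalIntegrable) 0)

lemma ae_hasDerivAt_of_eq_integral_Iic (hg : Integrable g) (hG : ∀ x, G x = ∫ y in Iic x, g y) :
    ∀ᵐ x, HasDerivAt G (g x) x := by
  filter_upwards [LocallyIntegrable.ae_hasDerivAt_integral hg.locallyIntegrable] with x hx
  rw [funext (eq_add_intervalIntegral_of_eq_integral_Iic hg hG 0)]
  exact (hx 0).const_add _

lemma tendsto_atBot_of_eq_integral_Iic (hG : ∀ x, G x = ∫ y in Iic x, g y) :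
    Tendsto G atBot (𝓝 0) := by
  rw [funext hG]
  exact tendsto_integral_Iic_zero tendsto_id

lemma tendsto_atTop_of_eq_integral_Iic (hg : Integrable g) (hG : ∀ x, G x = ∫ y in Iic x, g y) :
    Tendsto G atTop (𝓝 (∫ y, g y)) := by
  have hcompl : ∀ x, G x = (∫ y, g y) - ∫ y in Ioi x, g y := fun x => by
    rw [hG, ← intervalIntegral.integral_Iic_add_Ioi hg.integrableOn hg.integrableOn]
    ring
  rw [funext hcompl]
  simpa using (tendsto_integral_Ioi_zero tendsto_id).const_sub (∫ y, g y)

lemma sub_le_mul_of_eq_integral_Iic (hg : Integrable g) (hg_nonneg : ∀ x, 0 ≤ g x)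
    (hG : ∀ x, G x = ∫ y in Iic x, g y) {a b C : ℝ} (hab : a ≤ b)
    (hC : ∀ᵐ x, x ∈ Ioc a b → g x ≤ C) : G b - G a ≤ C * (b - a) := by
  rw [eq_add_intervalIntegral_of_eq_integral_Iic hg hG a b, add_sub_cancel_left]
  have hnorm := intervalIntegral.norm_integral_le_of_norm_le_const_ae (a := a) (b := b)
    (f := g) (C := C) (by
      filter_upwards [hC] with x hx hxab
      rw [uIoc_of_le hab] at hxab
      rw [Real.norm_of_nonneg (hg_nonneg x)]
      exact hx hxab)
  rw [abs_of_nonneg (sub_nonneg.2 hab)] at hnorm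
  exact (le_abs_self _).trans hnorm

end Density

lemma Monotone.apply_lt_of_hasDerivAt_ne_zero {f : ℝ → ℝ} {f' x y : ℝ} (hf : Monotone f)
    (hd : HasDerivAt f f' x) (hf' : f' ≠ 0) (hyx : y < x) : f y < f x := by
  refine (hf hyx.le).lt_of_ne fun heq => hf' ?_
  have hconst : ∀ z ∈ Icc y x, f z = f x := fun z hz =>
    le_antisymm (hf hz.2) (heq ▸ hf hz.1)
  exact (uniqueDiffOn_Icc hyx x ⟨hyx.le, le_rfl⟩).eq_deriv _ hd.hasDerivWithinAt
    ((hasDerivWithinAt_const x _ (f x)).congr hconst rfl)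

noncomputable def quantile (G : ℝ → ℝ) (s : ℝ) : ℝ := sInf {x | s ≤ G x}

section Quantile

variable {G : ℝ → ℝ} {s t : ℝ}

lemma bddBelow_setOf_le (h0 : Tendsto G atBot (𝓝 0)) (hs : 0 < s) :
    BddBelow {x | s ≤ G x} := by
  obtain ⟨x₀, hx₀⟩ := eventually_atBot.1 ((tendsto_order.1 h0).2 s hs)
  exact ⟨x₀, fun x hx => not_lt.1 fun hlt => (hx₀ x hlt.le).not_ge hx⟩

lemma nonempty_setOf_le (h1 : Tendsto G atTop (𝓝 1)) (hs : s < 1) :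
    {x | s ≤ G x}.Nonempty :=
  (((tendsto_order.1 h1).1 s hs).exists).imp fun _ => le_of_lt

lemma quantile_mono (h0 : Tendsto G atBot (𝓝 0)) (h1 : Tendsto G atTop (𝓝 1)) (hs : 0 < s)
    (hst : s ≤ t) (ht : t < 1) : quantile G s ≤ quantile G t :=
  csInf_le_csInf (bddBelow_setOf_le h0 hs) (nonempty_setOf_le h1 ht) fun _ hx => hst.trans hx

lemma apply_quantile (hG : Continuous G) (h0 : Tendsto G atBot (𝓝 0))
    (h1 : Tendsto G atTop (𝓝 1)) (hs : 0 < s) (hs' : s < 1) : G (quantile G s) = s := by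
  have hclosed : IsClosed {x | s ≤ G x} := isClosed_le continuous_const hG
  refine le_antisymm ?_ (hclosed.csInf_mem (nonempty_setOf_le h1 hs') (bddBelow_setOf_le h0 hs))
  -- every point left of the quantile has `G < s`; continuity carries this to the quantile
  have hleft : Iio (quantile G s) ⊆ {x | G x ≤ s} := fun x hx => show G x ≤ s from
    le_of_lt (not_le.1 fun hsx => (csInf_le (bddBelow_setOf_le h0 hs) hsx).not_gt hx)
  exact (isClosed_le hG continuous_const).closure_subset_iff.2 hleft
    (closure_Iio' (nonempty_Iio (a := quantile G s)) ▸ mem_Iic.2 le_rfl)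

lemma quantile_apply_eq_of_forall_lt {x : ℝ} (h : ∀ y < x, G y < G x) :
    quantile G (G x) = x :=
  IsLeast.csInf_eq ⟨le_refl (G x), fun y hy => not_lt.1 fun hyx => (h y hyx).not_ge hy⟩

lemma ae_le_comp_of_comp_quantile_le {g φ : ℝ → ℝ} (hG : Monotone G)
    (hderiv : ∀ᵐ x, HasDerivAt G (g x) x) (hφ : ∀ s, 0 ≤ φ s)
    (hbound : ∀ s, 0 < s → s < 1 → g (quantile G s) ≤ φ s) :
    ∀ᵐ x, 0 < G x → G x < 1 → g x ≤ φ (G x) := by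
  filter_upwards [hderiv] with x hx hx0 hx1
  by_cases hgx : g x = 0
  · exact hgx ▸ hφ _
  · have hstrict : ∀ y < x, G y < G x := fun y hy =>
      hG.apply_lt_of_hasDerivAt_ne_zero hx hgx hy
    have := hbound _ hx0 hx1
    rwa [quantile_apply_eq_of_forall_lt hstrict] at this

end Quantile

lemma sub_le_quantile_sub_mul_of_eq_integral_Iic {G g : ℝ → ℝ} {t t' C : ℝ} (hg : Integrable g)
    (hg_nonneg : ∀ x, 0 ≤ g x) (hG : ∀ x, G x = ∫ y in Iic x, g y)
    (h1 : Tendsto G atTop (𝓝 1)) (ht : 0 < t) (htt' : t ≤ t') (ht' : t' < 1)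
    (hC : ∀ᵐ x, t ≤ G x → G x ≤ t' → g x ≤ C) :
    t' - t ≤ (quantile G t' - quantile G t) * C := by
  have h0 := tendsto_atBot_of_eq_integral_Iic hG
  have hcont := continuous_of_eq_integral_Iic hg hG
  have hmono := monotone_of_eq_integral_Iic hg hg_nonneg hG
  have hGt := apply_quantile hcont h0 h1 ht (htt'.trans_lt ht')
  have hGt' := apply_quantile hcont h0 h1 (ht.trans_le htt') ht'
  have hle := quantile_mono h0 h1 ht htt' ht'
  calc t' - t = G (quantile G t') - G (quantile G t) := by rw [hGt, hGt']
    _ ≤ C * (quantile G t' - quantile G t) := by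
      refine sub_le_mul_of_eq_integral_Iic hg hg_nonneg hG hle ?_
      filter_upwards [hC] with x hx hxI
      exact hx (hGt ▸ hmono hxI.1.le) (hGt' ▸ hmono hxI.2)
    _ = (quantile G t' - quantile G t) * C := mul_comm _ _

/-- The quantile function of the symmetric triangular distribution on `[-a, a]`. -/
noncomputable def triangularQuantile (a s : ℝ) : ℝ :=
  if s ≤ 1 / 2 then a * (√(2 * s) - 1) else a * (1 - √(2 * (1 - s)))

lemma triangularQuantile_one_sub (a s : ℝ) :
    triangularQuantile a (1 - s) = -triangularQuantile a s := by
  unfold triangularQuantile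
  rcases lt_trichotomy s (1 / 2) with h | rfl | h
  · rw [if_neg (by linarith), if_pos h.le, sub_sub_cancel]; ring
  · norm_num
  · rw [if_pos (by linarith), if_neg (by linarith)]; ring

lemma triangularQuantile_sub_mul_sqrt_le_of_le_half {a m t t' : ℝ} (ha : 0 ≤ a) (hm : 0 ≤ m)
    (hmt : m ≤ t) (htt' : t ≤ t') (ht' : t' ≤ 1 / 2) :
    (triangularQuantile a t' - triangularQuantile a t) * √(2 * m) ≤ a * (t' - t) := by
  rw [triangularQuantile, triangularQuantile, if_pos ht', if_pos (htt'.trans ht')]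
  have hmono : √(2 * t) ≤ √(2 * t') := Real.sqrt_le_sqrt (by linarith)
  have hsq : √(2 * t) ^ 2 = 2 * t := Real.sq_sqrt (by linarith)
  have hsq' : √(2 * t') ^ 2 = 2 * t' := Real.sq_sqrt (by linarith)
  calc (a * (√(2 * t') - 1) - a * (√(2 * t) - 1)) * √(2 * m)
      = a * ((√(2 * t') - √(2 * t)) * √(2 * m)) := by ring
    _ ≤ a * ((√(2 * t') - √(2 * t)) * √(2 * t)) := by gcongr
    _ ≤ a * (t' - t) := by
      gcongr
      nlinarith [sq_nonneg (√(2 * t') - √(2 * t))]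

lemma triangularQuantile_sub_mul_sqrt_le {a m t t' : ℝ} (ha : 0 ≤ a) (hm : 0 ≤ m)
    (hmt : m ≤ t) (htt' : t ≤ t') (hmt' : m ≤ 1 - t') :
    (triangularQuantile a t' - triangularQuantile a t) * √(2 * m) ≤ a * (t' - t) := by
  have hright : ∀ s s', 1 / 2 ≤ s → s ≤ s' → m ≤ 1 - s' →
      (triangularQuantile a s' - triangularQuantile a s) * √(2 * m) ≤ a * (s' - s) := by
    intro s s' hs hss' hms'
    have := triangularQuantile_sub_mul_sqrt_le_of_le_half ha hm hms' (by linarith : 1 - s' ≤ 1 - s)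
      (by linarith)
    rw [triangularQuantile_one_sub, triangularQuantile_one_sub] at this
    linarith
  rcases le_total t' (1 / 2) with ht' | ht'
  · exact triangularQuantile_sub_mul_sqrt_le_of_le_half ha hm hmt htt' ht'
  rcases le_total (1 / 2) t with ht | ht
  · exact hright t t' ht htt' hmt'
  have hlow := triangularQuantile_sub_mul_sqrt_le_of_le_half ha hm hmt ht le_rfl
  have hhigh := hright (1 / 2) t' le_rfl ht' hmt'
  linarith

lemma triangularQuantile_sqrt_two_div_sub_mul_sqrt_le {c t t' : ℝ} (hc : 0 < c) (ht : 0 ≤ t)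
    (htt' : t ≤ t') (ht' : t' ≤ 1) :
    (triangularQuantile √(2 / c) t' - triangularQuantile √(2 / c) t) *
      √(c * min t (1 - t')) ≤ t' - t := by
  set m := min t (1 - t')
  have hm : 0 ≤ m := le_min ht (by linarith)
  have hsqrt : √(2 / c) * √(c * m) = √(2 * m) := by
    rw [← Real.sqrt_mul (by positivity)]
    congr 1
    field_simp
  have := triangularQuantile_sub_mul_sqrt_le (Real.sqrt_nonneg (2 / c)) hm (min_le_left _ _)
    htt' (min_le_right _ _)
  refine le_of_mul_le_mul_left ?_ (Real.sqrt_pos.2 (div_pos two_pos hc))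
  rw [← hsqrt] at this
  linarith

lemma apply_le_apply_of_forall_sub_le {f : ℝ → ℝ} {u v ε : ℝ} (hε : 0 < ε) (huv : u ≤ v)
    (hf : ∀ t t', u ≤ t → t ≤ t' → t' ≤ v → t' - t ≤ ε → f t ≤ f t') : f u ≤ f v := by
  have hstep : ∀ n : ℕ, f u ≤ f (min v (u + n * ε)) := by
    intro n
    induction n with
    | zero => simp [huv]
    | succ n ih =>
      refine ih.trans (hf _ _ (le_min huv (le_add_of_nonneg_right (by positivity)))
        (min_le_min_left _ (by push_cast; linarith)) (min_le_left _ _) ?_)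
      push_cast
      rcases le_total v (u + n * ε) with h | h
      · rw [min_eq_left h, min_eq_left (by linarith)]; linarith
      · rw [min_eq_right h]; linarith [min_le_right v (u + (n + 1) * ε)]
  obtain ⟨n, hn⟩ := exists_nat_ge ((v - u) / ε)
  have hv : v ≤ u + n * ε := by rw [div_le_iff₀ hε] at hn; linarith
  simpa [min_eq_left hv] using hstep n

lemma sub_le_sub_of_local_density_bounds {K Q : ℝ → ℝ} {c : ℝ} (hc : 0 < c)
    (hQ_mono : ∀ t t', 0 < t → t ≤ t' → t' < 1 → Q t ≤ Q t')
    (hQ : ∀ t t', 0 < t → t ≤ t' → t' < 1 → t' - t ≤ (Q t' - Q t) * √(c * min t' (1 - t)))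
    (hK : ∀ t t', 0 < t → t ≤ t' → t' < 1 → (K t' - K t) * √(c * min t (1 - t')) ≤ t' - t)
    {u v : ℝ} (hu : 0 < u) (huv : u ≤ v) (hv : v < 1) : K v - K u ≤ Q v - Q u := by
  set m := min u (1 - v)
  have hlocal : ∀ r, 1 < r → ∀ t t', u ≤ t → t ≤ t' → t' ≤ v → t' - t ≤ (r ^ 2 - 1) * m →
      K t' - K t ≤ r * (Q t' - Q t) := by
    intro r hr t t' hut htt' ht'v hsmall
    have ht : 0 < t := hu.trans_le hut
    have ht' : t' < 1 := ht'v.trans_lt hv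
    set p := min t (1 - t')
    have hmp : m ≤ p := min_le_min hut (by linarith)
    have hcp : 0 < √(c * p) := Real.sqrt_pos.2 (mul_pos hc (lt_min ht (by linarith)))
    -- `hQ` and `hK` bound the step through `√(c * (p + (t' - t)))` and `√(c * p)` respectively
    have hwiden : √(c * min t' (1 - t)) ≤ r * √(c * p) := by
      have hsum : min t' (1 - t) = p + (t' - t) := by
        rw [← min_add_add_right]; congr 1 <;> ring
      have hpr : p + (t' - t) ≤ r ^ 2 * p := by
        nlinarith [mul_le_mul_of_nonneg_left hmp (by nlinarith : (0 : ℝ) ≤ r ^ 2 - 1)]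
      rw [← Real.sqrt_sq (by linarith : 0 ≤ r), ← Real.sqrt_mul (sq_nonneg r), hsum]
      exact Real.sqrt_le_sqrt (by nlinarith)
    have hQ_nonneg : 0 ≤ Q t' - Q t := sub_nonneg.2 (hQ_mono t t' ht htt' ht')
    refine le_of_mul_le_mul_right ?_ hcp
    calc (K t' - K t) * √(c * p) ≤ t' - t := hK t t' ht htt' ht'
      _ ≤ (Q t' - Q t) * √(c * min t' (1 - t)) := hQ t t' ht htt' ht'
      _ ≤ (Q t' - Q t) * (r * √(c * p)) := mul_le_mul_of_nonneg_left hwiden hQ_nonneg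
      _ = r * (Q t' - Q t) * √(c * p) := by ring
  have hm : 0 < m := lt_min hu (by linarith)
  have hr : ∀ r, 1 < r → K v - K u ≤ r * (Q v - Q u) := fun r hr => by
    have := apply_le_apply_of_forall_sub_le (f := fun s => r * Q s - K s) (ε := (r ^ 2 - 1) * m)
      (mul_pos (by nlinarith) hm) huv fun t t' hut htt' ht'v hsmall => by
        linarith [hlocal r hr t t' hut htt' ht'v hsmall]
    linarith
  have hlim : Tendsto (fun r => r * (Q v - Q u)) (𝓝[>] 1) (𝓝 (1 * (Q v - Q u))) :=
    ((continuous_id.mul continuous_const).tendsto 1).mono_left nhdsWithin_le_nhds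
  simpa using ge_of_tendsto hlim (eventually_nhdsWithin_of_forall hr)

theorem van_zwet_triangular_spread_bound_general
    (G : ℝ → ℝ) (g : ℝ → ℝ)
    (hg_nonneg : ∀ x, 0 ≤ g x)
    (hdensity : ∀ x, G x = ∫ y in Iic x, g y)
    (hprob : (∫ y, g y) = 1)
    (Ginv : ℝ → ℝ) (hGinv : ∀ u, Ginv u = sInf {x : ℝ | u ≤ G x})
    (c : ℝ) (hc : 0 < c)
    (hbound : ∀ s : ℝ, 0 < s → s < 1 →
      g (Ginv s) ≤ Real.sqrt (c * min s (1 - s)))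
    (Kinv : ℝ → ℝ)
    (hKinv : ∀ s, Kinv s =
      if s ≤ 1 / 2 then Real.sqrt (2 / c) * (Real.sqrt (2 * s) - 1)
      else Real.sqrt (2 / c) * (1 - Real.sqrt (2 * (1 - s)))) :
    ∀ u v : ℝ, 0 < u → u < v → v < 1 →
      Kinv v - Kinv u ≤ Ginv v - Ginv u := by
  intro u v hu huv hv
  obtain rfl : Ginv = quantile G := funext hGinv
  obtain rfl : Kinv = triangularQuantile √(2 / c) := funext hKinv
  have hg : Integrable g := .of_integral_ne_zero (by simp [hprob])
  have h0 := tendsto_atBot_of_eq_integral_Iic hdensity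
  have h1 : Tendsto G atTop (𝓝 1) := hprob ▸ tendsto_atTop_of_eq_integral_Iic hg hdensity
  have hae := ae_le_comp_of_comp_quantile_le (monotone_of_eq_integral_Iic hg hg_nonneg hdensity)
    (ae_hasDerivAt_of_eq_integral_Iic hg hdensity) (fun _ => Real.sqrt_nonneg _) hbound
  refine sub_le_sub_of_local_density_bounds hc (fun _ _ => quantile_mono h0 h1)
    (fun t t' ht htt' ht' => ?_)
    (fun t t' ht htt' ht' => triangularQuantile_sqrt_two_div_sub_mul_sqrt_le hc ht.le htt' ht'.le)
    hu huv.le hv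
  refine sub_le_quantile_sub_mul_of_eq_integral_Iic hg hg_nonneg hdensity h1 ht htt' ht' ?_
  filter_upwards [hae] with x hx hxt hxt'
  refine (hx (ht.trans_le hxt) (hxt'.trans_lt ht')).trans (Real.sqrt_le_sqrt ?_)
  exact mul_le_mul_of_nonneg_left (min_le_min hxt' (by linarith)) hc.le

/-- Van Zwet spread bound: if `g(G⁻¹(s)) ≤ √(c(s ∧ (1−s)))` for all `s ∈ (0,1)`,
then `G` is at least as spread out as the symmetric triangular distribution on
`[−√(2/c), √(2/c)]`. -/
theorem van_zwet_triangular_spread_bound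
    (G : ℝ → ℝ) (g : ℝ → ℝ)
    (hg_meas : Measurable g) (hg_nonneg : ∀ x, 0 ≤ g x)
    (hdensity : ∀ x, G x = ∫ y in Iic x, g y)
    (hprob : (∫ y, g y) = 1)
    (Ginv : ℝ → ℝ) (hGinv : ∀ u, Ginv u = sInf {x : ℝ | u ≤ G x})
    (c : ℝ) (hc : 0 < c)
    (hbound : ∀ s : ℝ, 0 < s → s < 1 →
      g (Ginv s) ≤ Real.sqrt (c * min s (1 - s)))
    (Kinv : ℝ → ℝ)
    (hKinv : ∀ s, Kinv s =
      if s ≤ 1 / 2 then Real.sqrt (2 / c) * (Real.sqrt (2 * s) - 1)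
      else Real.sqrt (2 / c) * (1 - Real.sqrt (2 * (1 - s)))) :
    ∀ u v : ℝ, 0 < u → u < v → v < 1 →
      Kinv v - Kinv u ≤ Ginv v - Ginv u :=
  van_zwet_triangular_spread_bound_general G g hg_nonneg hdensity hprob Ginv hGinv c hc hbound Kinv
    hKinv
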